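/- arXiv:2101.06263 — 2 statements merged into one kernel-verified Lean document; each statement's English description precedes it below -/
import Mathlib

section
/- Let d = 2h with h odd. Then there is no function v : ℤ/d × ℤ/d → ℝ satisfying the Hadamard covariance condition v(p,q) ≡ v(-q,p) + p·q (mod d) for all p,q ∈ ℤ/d. Specifically, taking p = q = h, the condition forces h² ≡ 0 (mod d), but h odd and d = 2h imply h² ≡ h (mod d) with h ≢ 0, a contradiction. -/
/-- Congruence of real numbers modulo a natural number d. -/
def ModCong (d : ℕ) (a b : ℝ) : Prop := ∃ k : ℤ, a - b = d * k

/-- for d = 2h with h odd there is no v : ℤ/d × ℤ/d → ℝ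
satisfying the Hadamard covariance condition v(p,q) ≡ v(-q,p) + p·q (mod d). -/
theorem no_model_d_twice_odd (h : ℕ) (hh : Odd h) :
    ¬ ∃ v : ZMod (2 * h) × ZMod (2 * h) → ℝ,
      ∀ p q : ZMod (2 * h),
        ModCong (2 * h) (v (p, q)) (v (-q, p) + (p.val * q.val : ℕ)) := by
  rintro ⟨v, hv⟩
  have hpos : 0 < h := hh.pos
  have hneg : -(h : ZMod (2 * h)) = h := by
    have h2 : ((2 * h : ℕ) : ZMod (2 * h)) = 0 := ZMod.natCast_self _
    push_cast at h2
    linear_combination -h2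
  have hval : (h : ZMod (2 * h)).val = h := ZMod.val_natCast_of_lt (by omega)
  obtain ⟨k, hk⟩ := hv (h : ZMod (2 * h)) (h : ZMod (2 * h))
  rw [hneg, hval] at hk
  have hk' : -((h : ℝ) * h) = 2 * h * k := by push_cast at hk; linarith
  have hz : -((h : ℤ) * h) = 2 * h * k := by exact_mod_cast hk'
  have : (2 : ℤ) ∣ h := by
    have : (h : ℤ) * h = (h : ℤ) * (2 * (-k)) := by ring_nf; linarith [hz]
    have hcancel : (h : ℤ) = 2 * (-k) :=
      mul_left_cancel₀ (by exact_mod_cast hpos.ne') this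
    exact ⟨-k, hcancel⟩
  have : (2 : ℕ) ∣ h := by exact_mod_cast this
  exact (Nat.not_even_iff_odd.mpr hh) (even_iff_two_dvd.mpr this)
end

section
/- Let d = 4r with r ≥ 1, and suppose v : ℤ/d × ℤ/d → ℝ satisfies: (i) v(p+p', q+q') ≡ v(p,q) + v(p',q') + p'·q (mod d) whenever p·q' - q·p' ≡ 0 (mod d), and (ii) v(2p, 2q) ≡ 2·p·q (mod d) for all p,q. Then no such v exists: taking (p,q) = (0,2) and (p',q') = (2r, 2(r-1)) yields 2r² ≡ 2r(r-1) (mod d), i.e., 2r ≡ 0 (mod 4r), which is false. -/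
/-- for d = 4r (r ≥ 1), no v : ℤ/d × ℤ/d → ℝ can satisfy both
(i) v(p+p',q+q') ≡ v(p,q) + v(p',q') + p'·q (mod d) whenever pq' - qp' ≡ 0, and
(ii) v(2p,2q) ≡ 2pq (mod d). -/
theorem no_model_d_multiple_of_four (r : ℕ) (hr : 1 ≤ r)
    (v : ZMod (4 * r) × ZMod (4 * r) → ℝ)
    (hsum : ∀ p q p' q' : ZMod (4 * r), p * q' - q * p' = 0 →
      ModCong (4 * r) (v (p + p', q + q'))
        (v (p, q) + v (p', q') + (p'.val * q.val : ℕ)))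
    (heven : ∀ p q : ZMod (4 * r),
      ModCong (4 * r) (v (2 * p, 2 * q)) (2 * (p.val * q.val : ℕ))) :
    False := by
  have hd4 : 4 ≤ 4 * r := by omega
  haveI : NeZero (4 * r) := ⟨by omega⟩
  -- h1 : the sum rule at (0,2) and (2r, 2(r-1))
  have hcomm : (0 : ZMod (4 * r)) * (2 * ((r - 1 : ℕ) : ZMod (4 * r)))
      - 2 * (2 * (r : ZMod (4 * r))) = 0 := by
    have : ((4 * r : ℕ) : ZMod (4 * r)) = 0 := ZMod.natCast_self _
    push_cast at this ⊢
    linear_combination -this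
  have h1 := hsum 0 2 (2 * (r : ZMod (4 * r))) (2 * ((r - 1 : ℕ) : ZMod (4 * r))) hcomm
  have h2 := heven (r : ZMod (4 * r)) (r : ZMod (4 * r))
  have h3 := heven 0 1
  have h4 := heven (r : ZMod (4 * r)) ((r - 1 : ℕ) : ZMod (4 * r))
  -- normalize the arguments of v
  have hpair1 : ((0 : ZMod (4 * r)) + 2 * (r : ZMod (4 * r)),
      (2 : ZMod (4 * r)) + 2 * ((r - 1 : ℕ) : ZMod (4 * r)))
      = (2 * (r : ZMod (4 * r)), 2 * (r : ZMod (4 * r))) := by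
    have hc : ((r - 1 : ℕ) : ZMod (4 * r)) = (r : ZMod (4 * r)) - 1 := by
      push_cast [Nat.cast_sub hr]; ring
    rw [hc, Prod.ext_iff]
    constructor <;> ring
  have hpair3 : ((2 : ZMod (4 * r)) * 0, (2 : ZMod (4 * r)) * 1)
      = ((0 : ZMod (4 * r)), (2 : ZMod (4 * r))) := by
    rw [Prod.ext_iff]
    constructor <;> ring
  rw [hpair1] at h1
  rw [hpair3] at h3
  -- compute the vals
  have hv0 : (0 : ZMod (4 * r)).val = 0 := ZMod.val_zero
  have hv1 : (1 : ZMod (4 * r)).val = 1 := by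
    have : ((1 : ℕ) : ZMod (4 * r)).val = 1 := ZMod.val_cast_of_lt (by omega)
    simpa using this
  have hv2 : (2 : ZMod (4 * r)).val = 2 := by
    have : ((2 : ℕ) : ZMod (4 * r)).val = 2 := ZMod.val_cast_of_lt (by omega)
    simpa using this
  have hvr : ((r : ℕ) : ZMod (4 * r)).val = r := ZMod.val_cast_of_lt (by omega)
  have hvr1 : ((r - 1 : ℕ) : ZMod (4 * r)).val = r - 1 := ZMod.val_cast_of_lt (by omega)
  have hv2r : (2 * (r : ZMod (4 * r))).val = 2 * r := by
    have : ((2 * r : ℕ) : ZMod (4 * r)).val = 2 * r := ZMod.val_cast_of_lt (by omega)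
    rw [← this]; congr 1; push_cast; ring
  rw [hv2r, hv2] at h1
  rw [hvr] at h2
  rw [hv0, hv1] at h3
  rw [hvr, hvr1] at h4
  obtain ⟨k1, h1⟩ := h1
  obtain ⟨k2, h2⟩ := h2
  obtain ⟨k3, h3⟩ := h3
  obtain ⟨k4, h4⟩ := h4
  push_cast [Nat.cast_sub hr] at h1 h2 h3 h4
  have key : (2 * r : ℝ) = 4 * r * ((k2 : ℝ) - k1 - k3 - k4) := by
    nlinarith [h1, h2, h3, h4]
  have hrpos : (0 : ℝ) < r := by positivity
  have h2k : (2 * (k2 - k1 - k3 - k4) : ℤ) = 1 := by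
    have : (2 : ℝ) * ((k2 : ℝ) - k1 - k3 - k4) = 1 := by
      have h2r : (2 * r : ℝ) ≠ 0 := by positivity
      field_simp at key
      nlinarith [key, hrpos]
    exact_mod_cast this
  omega
end
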